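/- If q ≥ 1/2, then the level winning probabilities are monotone nondecreasing in the level: p_h ≤ p_{h+1} for every 0 ≤ h ≤ N−1. -/

import Mathlib

/-!
With `g x = q x + (1 - q)(1 - x)` and `G y = ∑ p k y ^ k`, we have `F = G ∘ g`. Both maps send
`[0, 1]` into itself and are monotone there (`g` has slope `2q - 1 ≥ 0`), hence so is `F`. The
levels are the backward orbit of `p_N = 1` under `F`: the first step goes down, `F 1 ≤ 1`, and
monotonicity of `F` propagates `p_{h+1} ≤ p_{h+2}` to `p_h ≤ p_{h+1}`.
-/

open Set

section BackwardRecursion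

variable {α : Type*} {s : Set α} {f : α → α} {N : ℕ} {P : ℕ → α}

lemma mem_of_backward_recursion (hfs : MapsTo f s s) (hPN : P N ∈ s)
    (hP : ∀ h < N, P h = f (P (h + 1))) {h : ℕ} (hh : h ≤ N) : P h ∈ s := by
  induction hh using Nat.decreasingInduction with
  | self => exact hPN
  | of_succ k hk ih => exact hP k hk ▸ hfs ih

lemma le_succ_of_backward_recursion [Preorder α] (hf : MonotoneOn f s) (hfs : MapsTo f s s)
    (hPN : P N ∈ s) (htop : f (P N) ≤ P N) (hP : ∀ h < N, P h = f (P (h + 1))) :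
    ∀ h < N, P h ≤ P (h + 1) := by
  intro h hh
  replace hh : h + 1 ≤ N := hh
  generalize hm : h + 1 = m at hh
  induction hh using Nat.decreasingInduction generalizing h with
  | self =>
    subst hm
    rw [hP h (Nat.lt_succ_self h)]
    exact htop
  | of_succ k hk ih =>
    subst hm
    calc P h = f (P (h + 1)) := hP h (by omega)
      _ ≤ f (P (h + 2)) := hf (mem_of_backward_recursion hfs hPN hP (by omega))
          (mem_of_backward_recursion hfs hPN hP hk) (ih (h + 1) rfl)
      _ = P (h + 1) := (hP (h + 1) hk).symm

end BackwardRecursion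

section GeneratingFunction

variable {p : ℕ → ℝ}

lemma pow_mul_le_of_mem_Icc (hp : ∀ k, 0 ≤ p k) {y : ℝ} (hy : y ∈ Icc (0 : ℝ) 1) (k : ℕ) :
    y ^ k * p k ≤ p k :=
  mul_le_of_le_one_left (hp k) (pow_le_one₀ hy.1 hy.2)

lemma summable_pow_mul_of_mem_Icc (hp : ∀ k, 0 ≤ p k) (hs : Summable p) {y : ℝ}
    (hy : y ∈ Icc (0 : ℝ) 1) : Summable fun k => y ^ k * p k :=
  hs.of_nonneg_of_le (fun k => mul_nonneg (pow_nonneg hy.1 k) (hp k))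
    (pow_mul_le_of_mem_Icc hp hy)

lemma monotoneOn_tsum_pow_mul (hp : ∀ k, 0 ≤ p k) (hs : Summable p) :
    MonotoneOn (fun y : ℝ => ∑' k, y ^ k * p k) (Icc 0 1) := fun _ hx _ hy hxy =>
  (summable_pow_mul_of_mem_Icc hp hs hx).tsum_le_tsum
    (fun k => mul_le_mul_of_nonneg_right (pow_le_pow_left₀ hx.1 hxy k) (hp k))
    (summable_pow_mul_of_mem_Icc hp hs hy)

lemma mapsTo_tsum_pow_mul (hp : ∀ k, 0 ≤ p k) (hpsum : HasSum p 1) :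
    MapsTo (fun y : ℝ => ∑' k, y ^ k * p k) (Icc 0 1) (Icc 0 1) := fun _ hy =>
  ⟨tsum_nonneg fun k => mul_nonneg (pow_nonneg hy.1 k) (hp k),
    hpsum.tsum_eq ▸ (summable_pow_mul_of_mem_Icc hp hpsum.summable hy).tsum_le_tsum
      (pow_mul_le_of_mem_Icc hp hy) hpsum.summable⟩

end GeneratingFunction

lemma monotone_mul_add_one_sub_mul {q : ℝ} (hq : 1 / 2 ≤ q) :
    Monotone fun x : ℝ => q * x + (1 - q) * (1 - x) := fun x y hxy => by
  nlinarith

lemma mapsTo_mul_add_one_sub_mul {q : ℝ} (hq0 : 0 ≤ q) (hq1 : q ≤ 1) :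
    MapsTo (fun x : ℝ => q * x + (1 - q) * (1 - x)) (Icc 0 1) (Icc 0 1) := fun x hx => by
  obtain ⟨hx0, hx1⟩ := hx
  constructor <;> nlinarith

theorem stmt_7_general (q : ℝ) (hq0 : 0 ≤ q) (hq1 : q ≤ 1)
    (p : ℕ → ℝ) (hp : ∀ k, 0 ≤ p k) (hpsum : HasSum p 1)
    (F : ℝ → ℝ)
    (hF : ∀ x : ℝ, F x = ∑' k : ℕ, (q * x + (1 - q) * (1 - x)) ^ k * p k)
    (N : ℕ)
    (P : ℕ → ℝ) (hPN : P N = 1) (hPrec : ∀ h, h < N → P h = F (P (h + 1)))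
    (hq : 1 / 2 ≤ q) :
    ∀ h, h < N → P h ≤ P (h + 1) := by
  have hFcomp : F = (fun y : ℝ => ∑' k, y ^ k * p k) ∘ fun x => q * x + (1 - q) * (1 - x) :=
    funext hF
  have hFmaps : MapsTo F (Icc 0 1) (Icc 0 1) :=
    hFcomp ▸ (mapsTo_tsum_pow_mul hp hpsum).comp (mapsTo_mul_add_one_sub_mul hq0 hq1)
  have hFmono : MonotoneOn F (Icc 0 1) :=
    hFcomp ▸ (monotoneOn_tsum_pow_mul hp hpsum.summable).comp
      ((monotone_mul_add_one_sub_mul hq).monotoneOn _) (mapsTo_mul_add_one_sub_mul hq0 hq1)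
  have hone : (1 : ℝ) ∈ Icc 0 1 := right_mem_Icc.2 zero_le_one
  exact le_succ_of_backward_recursion hFmono hFmaps (hPN ▸ hone) (hPN ▸ (hFmaps hone).2) hPrec

theorem stmt_7 (q : ℝ) (hq0 : 0 ≤ q) (hq1 : q ≤ 1)
    (p : ℕ → ℝ) (hp : ∀ k, 0 ≤ p k) (hpsum : HasSum p 1)
    (F : ℝ → ℝ)
    (hF : ∀ x : ℝ, F x = ∑' k : ℕ, (q * x + (1 - q) * (1 - x)) ^ k * p k)
    (N : ℕ) (hN : 1 ≤ N)
    (P : ℕ → ℝ) (hPN : P N = 1) (hPrec : ∀ h, h < N → P h = F (P (h + 1)))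
    (hq : 1 / 2 ≤ q) :
    ∀ h, h < N → P h ≤ P (h + 1) :=
  stmt_7_general q hq0 hq1 p hp hpsum F hF N P hPN hPrec hq
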